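/- (Proposition 1, iterated form.) For every c with 2/π < c < 1 there exists ε > 0 such that for every starting point θ_0 with |θ_0 − θ*| < ε, the sequence defined by θ_{t+1} = θ̂(θ_t − θ*) satisfies |θ_t − θ*| ≤ c^t·|θ_0 − θ*| for all t ≥ 0; in particular θ_t converges to the optimal balanced decision boundary θ* with a linear rate. -/

import Mathlib

/-- The standard normal density `φ`. -/
noncomputable def stdGauss (t : ℝ) : ℝ :=
  (Real.sqrt (2 * Real.pi))⁻¹ * Real.exp (-t ^ 2 / 2)

/-- The standard normal CDF `Φ`. -/
noncomputable def stdCDF (t : ℝ) : ℝ := ∫ s in Set.Iic t, stdGauss s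

/-- The (pseudo-)prior of the head class: `p1(Δ) = e^{2xΔ}/(1+e^{2xΔ})`, `x = (μ2−μ1)/2`. -/
noncomputable def pHead (x Δ : ℝ) : ℝ := Real.exp (2 * x * Δ) / (1 + Real.exp (2 * x * Δ))

/-- The (pseudo-)prior of the tail class: `p2(Δ) = 1/(1+e^{2xΔ})`, `x = (μ2−μ1)/2`. -/
noncomputable def pTail (x Δ : ℝ) : ℝ := 1 / (1 + Real.exp (2 * x * Δ))

/-- The mixture density `f_Δ(t) = p1(Δ)·φ(t−μ1) + p2(Δ)·φ(t−μ2)`. -/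
noncomputable def mixDensity (μ1 μ2 Δ t : ℝ) : ℝ :=
  pHead ((μ2 - μ1) / 2) Δ * stdGauss (t - μ1) + pTail ((μ2 - μ1) / 2) Δ * stdGauss (t - μ2)

/-- The conditional mean `m1(Δ)` of `f_Δ` to the left of the boundary `θ* + Δ`. -/
noncomputable def mLeft (μ1 μ2 Δ : ℝ) : ℝ :=
  (∫ t in Set.Iic ((μ1 + μ2) / 2 + Δ), t * mixDensity μ1 μ2 Δ t) /
    ∫ t in Set.Iic ((μ1 + μ2) / 2 + Δ), mixDensity μ1 μ2 Δ t

/-- The conditional mean `m2(Δ)` of `f_Δ` to the right of the boundary `θ* + Δ`. -/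
noncomputable def mRight (μ1 μ2 Δ : ℝ) : ℝ :=
  (∫ t in Set.Ioi ((μ1 + μ2) / 2 + Δ), t * mixDensity μ1 μ2 Δ t) /
    ∫ t in Set.Ioi ((μ1 + μ2) / 2 + Δ), mixDensity μ1 μ2 Δ t

/-- The progressively-balanced-sampling update `θ̂(Δ) = (m1(Δ) + m2(Δ))/2`. -/
noncomputable def pbsUpdate (μ1 μ2 Δ : ℝ) : ℝ := (mLeft μ1 μ2 Δ + mRight μ1 μ2 Δ) / 2

/-!
`θ̂(Δ) − θ*` has a closed form in `Φ` and `φ` (truncated moments of a Gaussian mixture); it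
vanishes at `Δ = 0`, where its slope is `4 E(Z + x)⁺ E(Z − x)⁺` for a standard normal `Z`. This
product is even in `x` and decreasing for `x ≥ 0`: its derivative has the sign of
`(2Φ − 1)φ − 2xΦ(1 − Φ)`, which elementary bounds on `∫₀ˣ φ` control for `x ≤ 1` and Gordon's
Mills-ratio bound for `x ≥ 1`. Hence the slope is at most `4φ(0)² = 2/π < c`, so `θ̂` contracts
by `c` near `θ*` and the iterates converge geometrically.
-/

open MeasureTheory Real Set Filter Topology

lemma stdGauss_eq_gaussianPDFReal : stdGauss = ProbabilityTheory.gaussianPDFReal 0 1 := by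
  ext t; simp [stdGauss, ProbabilityTheory.gaussianPDFReal]

lemma stdGauss_pos (t : ℝ) : 0 < stdGauss t := by
  unfold stdGauss; positivity

lemma stdGauss_neg (t : ℝ) : stdGauss (-t) = stdGauss t := by
  simp [stdGauss]

lemma stdGauss_zero : stdGauss 0 = (√(2 * π))⁻¹ := by
  simp [stdGauss]

lemma stdGauss_zero_sq : stdGauss 0 ^ 2 = 1 / (2 * π) := by
  rw [stdGauss_zero, inv_pow, sq_sqrt (by positivity), one_div]

lemma stdGauss_eq_stdGauss_zero_mul (t : ℝ) : stdGauss t = stdGauss 0 * exp (-t ^ 2 / 2) := by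
  simp [stdGauss]

lemma stdGauss_antitoneOn : AntitoneOn stdGauss (Ici 0) := by
  intro s hs t _ hst
  unfold stdGauss
  gcongr

lemma stdGauss_le_stdGauss_zero (t : ℝ) : stdGauss t ≤ stdGauss 0 := by
  unfold stdGauss
  exact mul_le_mul_of_nonneg_left (exp_le_exp.2 (by nlinarith [sq_nonneg t])) (by positivity)

lemma continuous_stdGauss : Continuous stdGauss := by
  unfold stdGauss; fun_prop

lemma integrable_stdGauss : Integrable stdGauss := by
  rw [stdGauss_eq_gaussianPDFReal]
  exact ProbabilityTheory.integrable_gaussianPDFReal 0 1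

lemma integral_stdGauss : ∫ t, stdGauss t = 1 := by
  rw [stdGauss_eq_gaussianPDFReal]
  exact ProbabilityTheory.integral_gaussianPDFReal_eq_one 0 one_ne_zero

lemma integrable_mul_stdGauss : Integrable fun t : ℝ => t * stdGauss t := by
  refine ((integrable_mul_exp_neg_mul_sq (by norm_num : (0:ℝ) < 1 / 2)).const_mul
    (√(2 * π))⁻¹).congr (Eventually.of_forall fun t => ?_)
  simp only [stdGauss]; ring_nf

lemma hasDerivAt_stdGauss (t : ℝ) : HasDerivAt stdGauss (-t * stdGauss t) t := by
  have h : HasDerivAt (fun t : ℝ => -t ^ 2 / 2) (-t) t :=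
    ((hasDerivAt_pow 2 t).neg.div_const 2).congr_deriv (by simp; ring)
  exact (h.exp.const_mul (√(2 * π))⁻¹).congr_deriv (by unfold stdGauss; ring)

lemma tendsto_stdGauss_atTop : Tendsto stdGauss atTop (𝓝 0) := by
  have h : Tendsto (fun t : ℝ => -t ^ 2 / 2) atTop atBot :=
    (tendsto_neg_atTop_atBot.comp (tendsto_pow_atTop two_ne_zero)).atBot_div_const two_pos
  have := (tendsto_exp_atBot.comp h).const_mul (√(2 * π))⁻¹
  rwa [mul_zero] at this

lemma tendsto_stdGauss_atBot : Tendsto stdGauss atBot (𝓝 0) := by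
  simpa [Function.comp_def, stdGauss_neg] using tendsto_stdGauss_atTop.comp tendsto_neg_atBot_atTop

lemma integral_Iic_mul_stdGauss (b : ℝ) : ∫ t in Iic b, t * stdGauss t = -stdGauss b := by
  simpa using integral_Iic_of_hasDerivAt_of_tendsto' (f := fun t => -stdGauss t) (a := b) (m := 0)
    (fun t _ => by simpa using (hasDerivAt_stdGauss t).fun_neg) integrable_mul_stdGauss.integrableOn
    (by simpa using tendsto_stdGauss_atBot.neg)

lemma integral_Ioi_mul_stdGauss (b : ℝ) : ∫ t in Ioi b, t * stdGauss t = stdGauss b := by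
  simpa using integral_Ioi_of_hasDerivAt_of_tendsto' (f := fun t => -stdGauss t) (a := b) (m := 0)
    (fun t _ => by simpa using (hasDerivAt_stdGauss t).fun_neg) integrable_mul_stdGauss.integrableOn
    (by simpa using tendsto_stdGauss_atTop.neg)

lemma setIntegral_stdGauss_pos {s : Set ℝ} (hs : 0 < volume s) : 0 < ∫ t in s, stdGauss t := by
  refine (setIntegral_pos_iff_support_of_nonneg_ae
    (Eventually.of_forall fun t => (stdGauss_pos t).le) integrable_stdGauss.integrableOn).2 ?_
  rwa [Function.support_eq_univ fun t => (stdGauss_pos t).ne', univ_inter]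

lemma integral_Ioi_stdGauss (b : ℝ) : ∫ t in Ioi b, stdGauss t = 1 - stdCDF b := by
  rw [stdCDF, ← integral_stdGauss, ← intervalIntegral.integral_Iic_add_Ioi
    integrable_stdGauss.integrableOn integrable_stdGauss.integrableOn]
  ring

lemma stdCDF_pos (b : ℝ) : 0 < stdCDF b :=
  setIntegral_stdGauss_pos (by simp)

lemma stdCDF_lt_one (b : ℝ) : stdCDF b < 1 := by
  have := setIntegral_stdGauss_pos (s := Ioi b) (by simp)
  rw [integral_Ioi_stdGauss] at this
  linarith

lemma stdCDF_neg (b : ℝ) : stdCDF (-b) = 1 - stdCDF b := by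
  rw [← integral_Ioi_stdGauss, stdCDF, ← integral_comp_neg_Ioi]
  simp only [stdGauss_neg]

lemma stdCDF_zero : stdCDF 0 = 1 / 2 := by
  linarith [neg_zero (G := ℝ) ▸ stdCDF_neg 0]

lemma stdCDF_sub_stdCDF (a b : ℝ) : stdCDF b - stdCDF a = ∫ t in a..b, stdGauss t :=
  intervalIntegral.integral_Iic_sub_Iic integrable_stdGauss.integrableOn
    integrable_stdGauss.integrableOn

lemma hasDerivAt_stdCDF (b : ℝ) : HasDerivAt stdCDF (stdGauss b) b := by
  have h := (intervalIntegral.integral_hasDerivAt_right (continuous_stdGauss.intervalIntegrable 0 b)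
    (continuous_stdGauss.stronglyMeasurableAtFilter _ _) continuous_stdGauss.continuousAt).const_add
    (stdCDF 0)
  refine h.congr_of_eventuallyEq (Eventually.of_forall fun y => ?_)
  simp only [← stdCDF_sub_stdCDF]; ring

lemma setIntegral_comp_sub_right (g : ℝ → ℝ) (μ : ℝ) (s : Set ℝ) :
    ∫ t in s, g (t - μ) = ∫ t in (· + μ) ⁻¹' s, g t := by
  simpa using ((measurePreserving_add_right volume μ).setIntegral_preimage_emb
    (measurableEmbedding_addRight μ) (fun t => g (t - μ)) s).symm

lemma integral_Iic_stdGauss_sub (μ β : ℝ) :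
    ∫ t in Iic β, stdGauss (t - μ) = stdCDF (β - μ) := by
  rw [setIntegral_comp_sub_right, preimage_add_const_Iic, stdCDF]

lemma integral_Ioi_stdGauss_sub (μ β : ℝ) :
    ∫ t in Ioi β, stdGauss (t - μ) = 1 - stdCDF (β - μ) := by
  rw [setIntegral_comp_sub_right, preimage_add_const_Ioi, integral_Ioi_stdGauss]

lemma setIntegral_mul_stdGauss_sub (μ : ℝ) (s : Set ℝ) :
    ∫ t in s, t * stdGauss (t - μ) =
      (∫ t in (· + μ) ⁻¹' s, t * stdGauss t) + μ * ∫ t in (· + μ) ⁻¹' s, stdGauss t := by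
  have h (t : ℝ) : t * stdGauss (t - μ) = (t - μ) * stdGauss (t - μ) + μ * stdGauss (t - μ) := by
    ring
  simp_rw [h]
  rw [setIntegral_comp_sub_right (fun t => t * stdGauss t + μ * stdGauss t),
    integral_add integrable_mul_stdGauss.integrableOn
      (integrable_stdGauss.const_mul μ).integrableOn,
    integral_const_mul]

lemma integral_Iic_mul_stdGauss_sub (μ β : ℝ) :
    ∫ t in Iic β, t * stdGauss (t - μ) = μ * stdCDF (β - μ) - stdGauss (β - μ) := by
  rw [setIntegral_mul_stdGauss_sub, preimage_add_const_Iic, integral_Iic_mul_stdGauss, stdCDF]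
  ring

lemma integral_Ioi_mul_stdGauss_sub (μ β : ℝ) :
    ∫ t in Ioi β, t * stdGauss (t - μ) = μ * (1 - stdCDF (β - μ)) + stdGauss (β - μ) := by
  rw [setIntegral_mul_stdGauss_sub, preimage_add_const_Ioi, integral_Ioi_mul_stdGauss,
    integral_Ioi_stdGauss]
  ring

lemma integrable_mul_stdGauss_sub (μ : ℝ) : Integrable fun t => t * stdGauss (t - μ) := by
  refine ((integrable_mul_stdGauss.comp_sub_right μ).add
    ((integrable_stdGauss.comp_sub_right μ).const_mul μ)).congr (Eventually.of_forall fun t => ?_)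
  simp only [Pi.add_apply]; ring

section Mixture

variable (μ1 μ2 Δ : ℝ) (s : Set ℝ)

lemma setIntegral_mixDensity :
    ∫ t in s, mixDensity μ1 μ2 Δ t =
      pHead ((μ2 - μ1) / 2) Δ * (∫ t in s, stdGauss (t - μ1)) +
        pTail ((μ2 - μ1) / 2) Δ * ∫ t in s, stdGauss (t - μ2) := by
  rw [← integral_const_mul, ← integral_const_mul, ← integral_add
    ((integrable_stdGauss.comp_sub_right μ1).const_mul _).integrableOn
    ((integrable_stdGauss.comp_sub_right μ2).const_mul _).integrableOn]
  rfl

lemma setIntegral_mul_mixDensity :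
    ∫ t in s, t * mixDensity μ1 μ2 Δ t =
      pHead ((μ2 - μ1) / 2) Δ * (∫ t in s, t * stdGauss (t - μ1)) +
        pTail ((μ2 - μ1) / 2) Δ * ∫ t in s, t * stdGauss (t - μ2) := by
  rw [← integral_const_mul, ← integral_const_mul, ← integral_add
    ((integrable_mul_stdGauss_sub μ1).const_mul _).integrableOn
    ((integrable_mul_stdGauss_sub μ2).const_mul _).integrableOn]
  simp only [mixDensity, mul_add, mul_left_comm]

end Mixture

lemma mul_stdGauss_le_stdCDF_sub_half {x : ℝ} (hx : 0 ≤ x) : x * stdGauss x ≤ stdCDF x - 1 / 2 := by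
  rw [← stdCDF_zero, stdCDF_sub_stdCDF]
  calc x * stdGauss x = ∫ _ in (0 : ℝ)..x, stdGauss x := by simp
    _ ≤ ∫ t in (0 : ℝ)..x, stdGauss t :=
      intervalIntegral.integral_mono_on hx intervalIntegrable_const
        (continuous_stdGauss.intervalIntegrable 0 x)
        fun t ht => stdGauss_antitoneOn ht.1 (ht.1.trans ht.2) ht.2

lemma stdCDF_sub_half_le_mul_stdGauss_zero {x : ℝ} (hx : 0 ≤ x) :
    stdCDF x - 1 / 2 ≤ x * stdGauss 0 := by
  rw [← stdCDF_zero, stdCDF_sub_stdCDF]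
  calc ∫ t in (0 : ℝ)..x, stdGauss t ≤ ∫ _ in (0 : ℝ)..x, stdGauss 0 :=
      intervalIntegral.integral_mono_on hx (continuous_stdGauss.intervalIntegrable 0 x)
        intervalIntegrable_const fun t _ => stdGauss_le_stdGauss_zero t
    _ = x * stdGauss 0 := by simp

lemma mul_one_sub_stdCDF_le_stdGauss (x : ℝ) : x * (1 - stdCDF x) ≤ stdGauss x := by
  rw [← integral_Ioi_stdGauss, ← integral_Ioi_mul_stdGauss, ← integral_const_mul]
  exact setIntegral_mono_on (integrable_stdGauss.const_mul x).integrableOn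
    integrable_mul_stdGauss.integrableOn measurableSet_Ioi
    fun t ht => mul_le_mul_of_nonneg_right (le_of_lt ht) (stdGauss_pos t).le

/-- Gordon's lower bound for the Mills ratio. -/
lemma mul_stdGauss_le_sq_add_one_mul_one_sub_stdCDF {x : ℝ} (hx : 0 < x) :
    x * stdGauss x ≤ (x ^ 2 + 1) * (1 - stdCDF x) := by
  have hbound : ∀ t ∈ Ioi x, stdGauss t + stdGauss t / t ^ 2 ≤ (1 + 1 / x ^ 2) * stdGauss t := by
    intro t ht
    have : stdGauss t / t ^ 2 ≤ stdGauss t / x ^ 2 :=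
      div_le_div_of_nonneg_left (stdGauss_pos t).le (by positivity)
        (pow_le_pow_left₀ hx.le (le_of_lt ht) 2)
    linarith [div_eq_mul_one_div (stdGauss t) (x ^ 2)]
  have hint : IntegrableOn (fun t => stdGauss t + stdGauss t / t ^ 2) (Ioi x) := by
    refine Integrable.mono' (integrable_stdGauss.const_mul (1 + 1 / x ^ 2)).integrableOn ?_
      ((ae_restrict_iff' measurableSet_Ioi).2 (Eventually.of_forall fun t ht => ?_))
    · refine ContinuousOn.aestronglyMeasurable ?_ measurableSet_Ioi
      exact continuous_stdGauss.continuousOn.add (continuous_stdGauss.continuousOn.div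
        (continuous_pow 2).continuousOn fun t ht => by have : 0 < t := hx.trans ht; positivity)
    · have := stdGauss_pos t
      rw [Real.norm_of_nonneg (by positivity)]
      exact hbound t ht
  have hftc : ∫ t in Ioi x, (stdGauss t + stdGauss t / t ^ 2) = stdGauss x / x := by
    have := integral_Ioi_of_hasDerivAt_of_tendsto' (f := fun t => -(stdGauss t / t)) (m := 0)
      (fun t ht => by
        have ht0 : t ≠ 0 := (hx.trans_le ht).ne'
        refine ((hasDerivAt_stdGauss t).div (hasDerivAt_id t) ht0).neg.congr_deriv ?_
        simp only [id]; field_simp; ring)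
      hint (by simpa using (tendsto_stdGauss_atTop.div_atTop tendsto_id).neg)
    rw [this]; ring
  have hmono : stdGauss x / x ≤ (1 + 1 / x ^ 2) * (1 - stdCDF x) := by
    rw [← hftc, ← integral_Ioi_stdGauss, ← integral_const_mul]
    exact setIntegral_mono_on hint (integrable_stdGauss.const_mul _).integrableOn
      measurableSet_Ioi hbound
  calc x * stdGauss x = x ^ 2 * (stdGauss x / x) := by field_simp
    _ ≤ x ^ 2 * ((1 + 1 / x ^ 2) * (1 - stdCDF x)) := by gcongr
    _ = (x ^ 2 + 1) * (1 - stdCDF x) := by field_simp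

lemma exp_neg_le_one_sub_add_sq {u : ℝ} (hu : 0 ≤ u) : exp (-u) ≤ 1 - u + u ^ 2 := by
  have h : exp (-u) * (1 + u) ≤ 1 := by
    calc exp (-u) * (1 + u) ≤ exp (-u) * exp u := by gcongr; linarith [add_one_le_exp u]
      _ = 1 := by rw [← exp_add, neg_add_cancel, exp_zero]
  -- `(1 - u + u²)(1 + u) = 1 + u³`
  nlinarith [exp_pos (-u), pow_nonneg hu 3]

lemma stdCDF_one_sub_half_le : stdCDF 1 - 1 / 2 ≤ 53 / 60 * stdGauss 0 := by
  rw [← stdCDF_zero, stdCDF_sub_stdCDF]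
  calc ∫ t in (0 : ℝ)..1, stdGauss t
      ≤ ∫ t in (0 : ℝ)..1, stdGauss 0 * (1 - t ^ 2 / 2 + t ^ 4 / 4) := by
        refine intervalIntegral.integral_mono_on zero_le_one
          (continuous_stdGauss.intervalIntegrable 0 1)
          ((by fun_prop : Continuous fun t : ℝ => _).intervalIntegrable 0 1) fun t _ => ?_
        rw [stdGauss_eq_stdGauss_zero_mul, neg_div]
        have := exp_neg_le_one_sub_add_sq (u := t ^ 2 / 2) (by positivity)
        gcongr
        · exact (stdGauss_pos 0).le
        · linarith
    _ = 53 / 60 * stdGauss 0 := by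
        rw [intervalIntegral.integral_const_mul, intervalIntegral.integral_add,
          intervalIntegral.integral_sub, intervalIntegral.integral_div,
          intervalIntegral.integral_div, integral_pow, integral_pow]
        · norm_num; ring
        all_goals exact (by fun_prop : Continuous fun t : ℝ => _).intervalIntegrable 0 1

lemma stdGauss_zero_mul_stdGauss_one_le : stdGauss 0 * stdGauss 1 ≤ stdCDF 1 * (1 - stdCDF 1) := by
  have hI := stdCDF_one_sub_half_le
  have hI0 : 0 ≤ stdCDF 1 - 1 / 2 := by
    have := mul_stdGauss_le_stdCDF_sub_half zero_le_one
    linarith [stdGauss_pos 1]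
  have hexp : exp (-1 / 2) ≤ 2 / 3 := by
    have h := add_one_le_exp (1 / 2)
    rw [neg_div, exp_neg, inv_le_comm₀ (exp_pos _) (by norm_num)]
    linarith
  have hg0 : stdGauss 0 ^ 2 ≤ 1 / 6 := by
    rw [stdGauss_zero_sq]
    gcongr
    linarith [pi_gt_three]
  -- `Φ(1)(1 − Φ(1)) = 1/4 − (Φ(1) − 1/2)²` and `((53/60)² + 2/3) / 6 < 1/4`
  rw [stdGauss_eq_stdGauss_zero_mul 1]
  have hg := stdGauss_pos 0
  norm_num at hexp ⊢
  nlinarith [mul_le_mul_of_nonneg_left hexp (sq_nonneg (stdGauss 0)),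
    mul_self_le_mul_self hI0 hI]

lemma stdGauss_zero_le_two_mul_stdGauss {y : ℝ} (hy : y ^ 2 ≤ 1) : stdGauss 0 ≤ 2 * stdGauss y := by
  rw [stdGauss_eq_stdGauss_zero_mul y]
  nlinarith [add_one_le_exp (-y ^ 2 / 2), stdGauss_pos 0]

lemma stdGauss_zero_mul_stdGauss_le {x : ℝ} (hx0 : 0 ≤ x) (hx1 : x ≤ 1) :
    stdGauss 0 * stdGauss x ≤ stdCDF x * (1 - stdCDF x) := by
  let ψ y := stdCDF y * (1 - stdCDF y) - stdGauss 0 * stdGauss y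
  have hψ (y : ℝ) : HasDerivAt ψ (stdGauss y * (y * stdGauss 0 - (2 * stdCDF y - 1))) y :=
    (((hasDerivAt_stdCDF y).mul ((hasDerivAt_stdCDF y).const_sub 1)).sub
      ((hasDerivAt_stdGauss y).const_mul (stdGauss 0))).congr_deriv (by ring)
  have hanti : AntitoneOn ψ (Icc 0 1) := by
    refine antitoneOn_of_hasDerivWithinAt_nonpos (convex_Icc 0 1)
      (HasDerivAt.continuousOn fun y _ => hψ y) (fun y _ => (hψ y).hasDerivWithinAt) ?_
    intro y hy
    rw [interior_Icc] at hy
    obtain ⟨hy0, hy1⟩ := hy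
    -- `y φ(0) ≤ 2 y φ(y) ≤ 2Φ(y) − 1` on `[0, 1]`
    have h1 := mul_stdGauss_le_stdCDF_sub_half hy0.le
    have h2 := stdGauss_zero_le_two_mul_stdGauss (y := y) (by nlinarith)
    exact mul_nonpos_of_nonneg_of_nonpos (stdGauss_pos y).le (by nlinarith)
  have := hanti ⟨hx0, hx1⟩ ⟨zero_le_one, le_rfl⟩ hx1
  linarith [stdGauss_zero_mul_stdGauss_one_le]

lemma two_mul_stdCDF_sub_one_mul_stdGauss_le {x : ℝ} (hx : 0 ≤ x) :
    (2 * stdCDF x - 1) * stdGauss x ≤ 2 * x * stdCDF x * (1 - stdCDF x) := by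
  have hg := stdGauss_pos x
  have hP := stdCDF_lt_one x
  rcases le_or_gt x 1 with hx1 | hx1
  · calc (2 * stdCDF x - 1) * stdGauss x ≤ 2 * x * (stdGauss 0 * stdGauss x) := by
          nlinarith [stdCDF_sub_half_le_mul_stdGauss_zero hx]
      _ ≤ 2 * x * stdCDF x * (1 - stdCDF x) := by
          nlinarith [stdGauss_zero_mul_stdGauss_le hx hx1]
  · have hgordon := mul_stdGauss_le_sq_add_one_mul_one_sub_stdCDF (zero_lt_one.trans hx1)
    have hP0 := stdCDF_pos x
    -- multiply through by `x (x² + 1)` and use `(2Φ − 1)(x² + 1) ≤ 2Φ x²`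
    refine le_of_mul_le_mul_right ?_ (by positivity : 0 < x * (x ^ 2 + 1))
    nlinarith [mul_le_mul_of_nonneg_left hgordon (by positivity : 0 ≤ 2 * x ^ 2 * stdCDF x),
      mul_le_mul_of_nonneg_left (by nlinarith : 2 * stdCDF x - 1 - x ^ 2 ≤ 0)
        (by positivity : 0 ≤ x * stdGauss x)]

/-- `E (Z + x)⁺` for a standard normal `Z`. -/
noncomputable def posPartMean (x : ℝ) : ℝ := x * stdCDF x + stdGauss x

lemma posPartMean_neg (x : ℝ) : posPartMean (-x) = stdGauss x - x * (1 - stdCDF x) := by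
  simp only [posPartMean, stdCDF_neg, stdGauss_neg]; ring

lemma posPartMean_nonneg (x : ℝ) : 0 ≤ posPartMean x := by
  have := posPartMean_neg (-x)
  rw [neg_neg] at this
  linarith [mul_one_sub_stdCDF_le_stdGauss (-x)]

lemma hasDerivAt_posPartMean (x : ℝ) : HasDerivAt posPartMean (stdCDF x) x :=
  (((hasDerivAt_id x).mul (hasDerivAt_stdCDF x)).add (hasDerivAt_stdGauss x)).congr_deriv
    (by simp only [id]; ring)

lemma posPartMean_mul_posPartMean_neg_le (x : ℝ) :
    posPartMean x * posPartMean (-x) ≤ stdGauss 0 ^ 2 := by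
  wlog hx : 0 ≤ x generalizing x
  · simpa [mul_comm] using this (-x) (by linarith)
  let U y := posPartMean y * posPartMean (-y)
  have hU (y : ℝ) : HasDerivAt U
      ((2 * stdCDF y - 1) * stdGauss y - 2 * y * stdCDF y * (1 - stdCDF y)) y := by
    refine ((hasDerivAt_posPartMean y).mul
      ((hasDerivAt_posPartMean (-y)).comp y (hasDerivAt_neg y))).congr_deriv ?_
    simp only [Function.comp_apply, stdCDF_neg, stdGauss_neg, posPartMean]; ring
  have hanti : AntitoneOn U (Ici 0) := by
    refine antitoneOn_of_hasDerivWithinAt_nonpos (convex_Ici 0)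
      (HasDerivAt.continuousOn fun y _ => hU y) (fun y _ => (hU y).hasDerivWithinAt) ?_
    intro y hy
    rw [interior_Ici] at hy
    linarith [two_mul_stdCDF_sub_one_mul_stdGauss_le (le_of_lt hy)]
  have := hanti self_mem_Ici hx hx
  simpa [U, posPartMean, sq] using this

/-- `(m1 + m2)/2 − θ*` after multiplying numerator and denominator of each `mᵢ − θ*` by
`1 + e^{2xΔ}`; here `x = (μ2 − μ1)/2`. -/
noncomputable def pbsShift (x Δ : ℝ) : ℝ :=
  (exp (2 * x * Δ) * (-x * stdCDF (x + Δ) - stdGauss (x + Δ)) +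
      (x * stdCDF (Δ - x) - stdGauss (Δ - x))) /
    (exp (2 * x * Δ) * stdCDF (x + Δ) + stdCDF (Δ - x)) / 2 +
  (exp (2 * x * Δ) * (-x * (1 - stdCDF (x + Δ)) + stdGauss (x + Δ)) +
      (x * (1 - stdCDF (Δ - x)) + stdGauss (Δ - x))) /
    (exp (2 * x * Δ) * (1 - stdCDF (x + Δ)) + (1 - stdCDF (Δ - x))) / 2

lemma pbsUpdate_eq (μ1 μ2 Δ : ℝ) :
    pbsUpdate μ1 μ2 Δ = (μ1 + μ2) / 2 + pbsShift ((μ2 - μ1) / 2) Δ := by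
  have hleft : (μ1 + μ2) / 2 + Δ - μ1 = (μ2 - μ1) / 2 + Δ := by ring
  have hright : (μ1 + μ2) / 2 + Δ - μ2 = Δ - (μ2 - μ1) / 2 := by ring
  unfold pbsUpdate mLeft mRight
  simp only [setIntegral_mixDensity, setIntegral_mul_mixDensity, integral_Iic_stdGauss_sub,
    integral_Ioi_stdGauss_sub, integral_Iic_mul_stdGauss_sub, integral_Ioi_mul_stdGauss_sub,
    hleft, hright, pbsShift, pHead, pTail]
  generalize (μ2 - μ1) / 2 + Δ = a at *
  generalize Δ - (μ2 - μ1) / 2 = b at *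
  have hE := exp_pos (2 * ((μ2 - μ1) / 2) * Δ)
  generalize exp (2 * ((μ2 - μ1) / 2) * Δ) = E at *
  have := stdCDF_pos a
  have := stdCDF_pos b
  have := stdCDF_lt_one a
  have := stdCDF_lt_one b
  have : 0 < E * (1 - stdCDF a) + (1 - stdCDF b) := by nlinarith
  field_simp
  ring

lemma pbsShift_zero (x : ℝ) : pbsShift x 0 = 0 := by
  simp only [pbsShift, mul_zero, exp_zero, add_zero, zero_sub, stdCDF_neg, stdGauss_neg]
  ring

noncomputable def pbsRate (x : ℝ) : ℝ := 4 * posPartMean x * posPartMean (-x)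

lemma hasDerivAt_pbsShift_zero (x : ℝ) : HasDerivAt (pbsShift x) (pbsRate x) 0 := by
  have hP1 : HasDerivAt (fun Δ => stdCDF (x + Δ)) (stdGauss x) 0 :=
    HasDerivAt.comp_const_add x 0 (by simpa using hasDerivAt_stdCDF x)
  have hP2 : HasDerivAt (fun Δ => stdCDF (Δ - x)) (stdGauss x) 0 :=
    HasDerivAt.comp_sub_const 0 x (by simpa [stdGauss_neg] using hasDerivAt_stdCDF (-x))
  have hf1 : HasDerivAt (fun Δ => stdGauss (x + Δ)) (-x * stdGauss x) 0 :=
    HasDerivAt.comp_const_add x 0 (by simpa using hasDerivAt_stdGauss x)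
  have hf2 : HasDerivAt (fun Δ => stdGauss (Δ - x)) (x * stdGauss x) 0 :=
    HasDerivAt.comp_sub_const 0 x (by simpa [stdGauss_neg] using hasDerivAt_stdGauss (-x))
  have hE : HasDerivAt (fun Δ => exp (2 * x * Δ)) (2 * x) 0 := by
    simpa using ((hasDerivAt_id (0 : ℝ)).const_mul (2 * x)).exp
  have hden1 := (hE.mul hP1).add hP2
  have hden2 := (hE.mul (hP1.const_sub 1)).add (hP2.const_sub 1)
  have hG := ((((hE.mul ((hP1.const_mul (-x)).sub hf1)).add ((hP2.const_mul x).sub hf2)).div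
    hden1 (by simp [stdCDF_neg])).div_const 2).add
    ((((hE.mul (((hP1.const_sub 1).const_mul (-x)).add hf1)).add
      (((hP2.const_sub 1).const_mul x).add hf2)).div hden2 (by simp [stdCDF_neg])).div_const 2)
  refine hG.congr_deriv ?_
  simp only [Pi.add_apply, Pi.sub_apply, Pi.mul_apply, pbsRate, posPartMean, mul_zero, exp_zero,
    add_zero, zero_sub, stdCDF_neg, stdGauss_neg]
  field_simp
  ring

lemma abs_pbsRate_le (x : ℝ) : |pbsRate x| ≤ 2 / π := by
  have h := posPartMean_mul_posPartMean_neg_le x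
  have := posPartMean_nonneg x
  have := posPartMean_nonneg (-x)
  rw [stdGauss_zero_sq] at h
  rw [pbsRate, abs_of_nonneg (by positivity)]
  calc 4 * posPartMean x * posPartMean (-x) ≤ 4 * (1 / (2 * π)) := by linarith
    _ = 2 / π := by field_simp; ring

lemma pbsUpdate_zero (μ1 μ2 : ℝ) : pbsUpdate μ1 μ2 0 = (μ1 + μ2) / 2 := by
  rw [pbsUpdate_eq, pbsShift_zero, add_zero]

lemma hasDerivAt_pbsUpdate_zero (μ1 μ2 : ℝ) :
    HasDerivAt (pbsUpdate μ1 μ2) (pbsRate ((μ2 - μ1) / 2)) 0 := by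
  rw [funext (pbsUpdate_eq μ1 μ2)]
  exact (hasDerivAt_pbsShift_zero _).const_add _

lemma HasDerivAt.eventually_norm_sub_le {𝕜 F : Type*} [NontriviallyNormedField 𝕜]
    [NormedAddCommGroup F] [NormedSpace 𝕜 F] {f : 𝕜 → F} {f' : F} {a : 𝕜} {c : ℝ}
    (hf : HasDerivAt f f' a) (hc : ‖f'‖ < c) : ∀ᶠ y in 𝓝 a, ‖f y - f a‖ ≤ c * ‖y - a‖ := by
  filter_upwards [hf.isLittleO.def (sub_pos.2 hc)] with y hy
  calc ‖f y - f a‖ ≤ ‖f y - f a - (y - a) • f'‖ + ‖(y - a) • f'‖ := by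
        simpa using norm_add_le (f y - f a - (y - a) • f') ((y - a) • f')
    _ ≤ (c - ‖f'‖) * ‖y - a‖ + ‖y - a‖ * ‖f'‖ := by rw [norm_smul]; gcongr
    _ = c * ‖y - a‖ := by ring

lemma dist_le_pow_mul_and_tendsto_of_contracting_near {X : Type*} [PseudoMetricSpace X]
    {g : X → X} {p : X} {c δ : ℝ} (hc0 : 0 ≤ c) (hc1 : c < 1)
    (hg : ∀ y, dist y p < δ → dist (g y) p ≤ c * dist y p) {s : ℕ → X} (hs0 : dist (s 0) p < δ)
    (hs : ∀ t, s (t + 1) = g (s t)) :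
    (∀ t, dist (s t) p ≤ c ^ t * dist (s 0) p) ∧ Tendsto s atTop (𝓝 p) := by
  have hdist : ∀ t, dist (s t) p ≤ c ^ t * dist (s 0) p := by
    intro t
    induction t with
    | zero => simp
    | succ t ih =>
      have hnear : dist (s t) p < δ :=
        (ih.trans (mul_le_of_le_one_left dist_nonneg (pow_le_one₀ hc0 hc1.le))).trans_lt hs0
      calc dist (s (t + 1)) p ≤ c * dist (s t) p := hs t ▸ hg _ hnear
        _ ≤ c * (c ^ t * dist (s 0) p) := by gcongr
        _ = c ^ (t + 1) * dist (s 0) p := by ring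
  refine ⟨hdist, tendsto_iff_dist_tendsto_zero.2 (squeeze_zero (fun _ => dist_nonneg) hdist ?_)⟩
  simpa using (tendsto_pow_atTop_nhds_zero_of_lt_one hc0 hc1).mul_const (dist (s 0) p)

theorem pbsUpdate_linear_convergence_general (μ1 μ2 : ℝ) :
    ∀ c : ℝ, 2 / Real.pi < c → c < 1 →
      ∃ ε > (0 : ℝ), ∀ θseq : ℕ → ℝ,
        |θseq 0 - (μ1 + μ2) / 2| < ε →
        (∀ t : ℕ, θseq (t + 1) = pbsUpdate μ1 μ2 (θseq t - (μ1 + μ2) / 2)) →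
        (∀ t : ℕ, |θseq t - (μ1 + μ2) / 2| ≤ c ^ t * |θseq 0 - (μ1 + μ2) / 2|) ∧
        Filter.Tendsto θseq Filter.atTop (nhds ((μ1 + μ2) / 2)) := by
  intro c hc hc1
  have hrate : ‖pbsRate ((μ2 - μ1) / 2)‖ < c := (abs_pbsRate_le _).trans_lt hc
  obtain ⟨δ, hδ, hnear⟩ := Metric.eventually_nhds_iff.1
    ((hasDerivAt_pbsUpdate_zero μ1 μ2).eventually_norm_sub_le hrate)
  refine ⟨δ, hδ, fun θseq h0 hrec => ?_⟩
  have hcontract : ∀ y, dist y ((μ1 + μ2) / 2) < δ →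
      dist (pbsUpdate μ1 μ2 (y - (μ1 + μ2) / 2)) ((μ1 + μ2) / 2) ≤ c * dist y ((μ1 + μ2) / 2) := by
    intro y hy
    simpa [Real.dist_eq, pbsUpdate_zero] using
      hnear (y := y - (μ1 + μ2) / 2) (by rwa [Real.dist_eq, sub_zero, ← Real.dist_eq])
  simpa only [Real.dist_eq] using dist_le_pow_mul_and_tendsto_of_contracting_near
    ((div_pos two_pos pi_pos).trans hc).le hc1 hcontract (by rwa [Real.dist_eq]) hrec

/-- **Proposition 1 (iterated form).** For every `c` with `2/π < c < 1` there is
`ε > 0` such that any sequence started with `|θ₀ − θ*| < ε` and iterated via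
`θ_{t+1} = θ̂(θ_t − θ*)` satisfies `|θ_t − θ*| ≤ c^t·|θ₀ − θ*|` for all `t`; in
particular it converges to the optimal balanced decision boundary `θ*` with a
linear rate. -/
theorem pbsUpdate_linear_convergence (μ1 μ2 : ℝ) (hμ : μ1 < μ2) :
    ∀ c : ℝ, 2 / Real.pi < c → c < 1 →
      ∃ ε > (0 : ℝ), ∀ θseq : ℕ → ℝ,
        |θseq 0 - (μ1 + μ2) / 2| < ε →
        (∀ t : ℕ, θseq (t + 1) = pbsUpdate μ1 μ2 (θseq t - (μ1 + μ2) / 2)) →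
        (∀ t : ℕ, |θseq t - (μ1 + μ2) / 2| ≤ c ^ t * |θseq 0 - (μ1 + μ2) / 2|) ∧
        Filter.Tendsto θseq Filter.atTop (nhds ((μ1 + μ2) / 2)) :=
  pbsUpdate_linear_convergence_general μ1 μ2
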